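/- The sequence μ_n = n δ_{1/n²} − n δ_{−1/n²} on ℝ satisfies ‖μ_n‖^{a,b} → 0 as n → ∞ (with ‖μ_n‖^{a,b} = 2bn/n² for n large), while the total masses |μ_n| = 2n are unbounded. Hence convergence to 0 in ‖·‖^{a,b} does not imply boundedness of total variation. -/

import Mathlib

open MeasureTheory ENNReal Filter

noncomputable section

variable {X : Type*} [MeasurableSpace X] [MetricSpace X]

/-- Classical 1-Wasserstein "distance" as infimum over couplings (`⊤` if no coupling). -/
def W1 (μ ν : Measure X) : ℝ≥0∞ :=
  ⨅ (π : Measure (X × X)) (_ : π.map Prod.fst = μ ∧ π.map Prod.snd = ν),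
    ∫⁻ p, edist p.1 p.2 ∂π

/-- Total-variation mass `|μ - ν|` of the difference of two positive measures. -/
def tvMass (μ ν : Measure X) : ℝ≥0∞ :=
  (μ Set.univ + ν Set.univ) - 2 * (μ ⊓ ν) Set.univ

/-- Generalized Wasserstein distance `W₁^{a,b}` on positive measures. -/
def genW (a b : ℝ) (μ ν : Measure X) : ℝ≥0∞ :=
  ⨅ (μ' : Measure X) (ν' : Measure X) (_ : μ' Set.univ = ν' Set.univ),
    (ENNReal.ofReal a * (tvMass μ μ' + tvMass ν ν') + ENNReal.ofReal b * W1 μ' ν')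

/-- Signed generalized Wasserstein distance `𝕎₁^{a,b}`. -/
def sW (a b : ℝ) (μ ν : SignedMeasure X) : ℝ≥0∞ :=
  genW a b (μ.toJordanDecomposition.posPart + ν.toJordanDecomposition.negPart)
           (μ.toJordanDecomposition.negPart + ν.toJordanDecomposition.posPart)

/-- The generalized Wasserstein norm `‖μ‖^{a,b}` on signed measures. -/
def sNorm (a b : ℝ) (μ : SignedMeasure X) : ℝ≥0∞ :=
  genW a b μ.toJordanDecomposition.posPart μ.toJordanDecomposition.negPart

abbrev Euc (d : ℕ) := EuclideanSpace ℝ (Fin d)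

end

/-! For `x ≠ y` the Jordan decomposition of `c δ_x - c δ_y` is `(c δ_x, c δ_y)`, so its total
variation is `2c` and its norm is `W₁^{a,b}(c δ_x, c δ_y)`. If `b |x - y| ≤ 2a` this equals
`b c |x - y|`: transporting all the mass costs that much, and no competitor `(μ', ν', π)` is
cheaper. Indeed, if `q ≤ c` is the mass that `π` carries from `x` to `y`, then changing the masses
costs at least `2a (c - q) ≥ b |x - y| (c - q)` and the transport at least `b |x - y| q`.
For `x = -y = 1/n²` and `c = n` the norm is `2bn/n² → 0`, while the total variation `2n` is
unbounded. -/

open scoped NNReal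

section

variable {X : Type*} [MeasurableSpace X]

theorem tvMass_self (μ : Measure X) [IsFiniteMeasure μ] : tvMass μ μ = 0 := by
  simp [tvMass, two_mul]

theorem tvMass_eq_top (μ : Measure X) [IsFiniteMeasure μ] {μ' : Measure X}
    (h : μ' Set.univ = ⊤) : tvMass μ μ' = ⊤ := by
  have : (μ ⊓ μ') Set.univ ≠ ⊤ :=
    ne_top_of_le_ne_top (measure_ne_top μ _) (Measure.le_iff'.1 inf_le_left _)
  simp [tvMass, h, ENNReal.mul_ne_top, this]

theorem measure_univ_add_le_tvMass (μ μ' : Measure X) :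
    μ Set.univ + μ' Set.univ ≤ tvMass μ μ' + 2 * (μ ⊓ μ') Set.univ :=
  le_tsub_add

theorem toJordanDecomposition_toSignedMeasure_sub {μ ν : Measure X} [IsFiniteMeasure μ]
    [IsFiniteMeasure ν] (h : μ ⟂ₘ ν) :
    (μ.toSignedMeasure - ν.toSignedMeasure).toJordanDecomposition = ⟨μ, ν, h⟩ :=
  SignedMeasure.toJordanDecomposition_eq rfl

theorem smul_toSignedMeasure_sub {μ ν : Measure X} [IsFiniteMeasure μ] [IsFiniteMeasure ν]
    (c : ℝ≥0) :
    (c : ℝ) • (μ.toSignedMeasure - ν.toSignedMeasure) =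
      (c • μ).toSignedMeasure - (c • ν).toSignedMeasure := by
  rw [← NNReal.smul_def, smul_sub, Measure.toSignedMeasure_smul, Measure.toSignedMeasure_smul]

variable [MeasurableSingletonClass X]

theorem dirac_mutuallySingular_dirac {x y : X} (hxy : x ≠ y) :
    Measure.dirac x ⟂ₘ Measure.dirac y :=
  ⟨{x}ᶜ, (measurableSet_singleton x).compl, by simp, by simp [hxy.symm]⟩

theorem inf_smul_dirac_univ_le (c : ℝ≥0) (x : X) (μ' : Measure X) :
    ((c • Measure.dirac x) ⊓ μ') Set.univ ≤ min (c : ℝ≥0∞) (μ' {x}) := by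
  set ν := (c • Measure.dirac x) ⊓ μ'
  have hν : ν ≤ c • Measure.dirac x := inf_le_left
  have hcompl : ν {x}ᶜ = 0 :=
    le_zero_iff.1 ((Measure.le_iff'.1 hν _).trans (by simp))
  rw [← measure_add_measure_compl (measurableSet_singleton x), hcompl, add_zero]
  exact le_min ((Measure.le_iff'.1 hν _).trans (by simp)) (Measure.le_iff'.1 inf_le_right _)

theorem add_le_measure_univ_add_of_coupling {μ' ν' : Measure X} {π : Measure (X × X)}
    (h₁ : π.map Prod.fst = μ') (h₂ : π.map Prod.snd = ν') (x y : X) :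
    μ' {x} + ν' {y} ≤ π Set.univ + π {(x, y)} := by
  subst h₁ h₂
  rw [Measure.map_apply measurable_fst (measurableSet_singleton x),
    Measure.map_apply measurable_snd (measurableSet_singleton y),
    ← measure_union_add_inter _ (measurable_snd (measurableSet_singleton y))]
  gcongr
  · exact Set.subset_univ _
  · rintro ⟨p, q⟩ ⟨hp, hq⟩
    simp_all

theorem min_add_min_le_of_coupling {μ' ν' : Measure X} {π : Measure (X × X)}
    (h₁ : π.map Prod.fst = μ') (h₂ : π.map Prod.snd = ν') (c : ℝ≥0∞) (x y : X) :
    min c (μ' {x}) + min c (ν' {y}) ≤ π Set.univ + min c (π {(x, y)}) := by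
  rcases le_total (π {(x, y)}) c with h | h
  · rw [min_eq_right h]
    exact (add_le_add (min_le_right _ _) (min_le_right _ _)).trans
      (add_le_measure_univ_add_of_coupling h₁ h₂ x y)
  · have hν : ν' {y} ≤ π Set.univ := by
      rw [← h₂, Measure.map_apply measurable_snd (measurableSet_singleton y)]
      exact measure_mono (Set.subset_univ _)
    rw [min_eq_left h, add_comm]
    exact add_le_add ((min_le_right _ _).trans hν) (min_le_left _ _)

theorem add_measure_univ_le_tvMass_smul_dirac (c : ℝ≥0) (x : X) (ρ : Measure X) :
    c + ρ Set.univ ≤ tvMass (c • Measure.dirac x) ρ + 2 * min (c : ℝ≥0∞) (ρ {x}) :=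
  calc (c : ℝ≥0∞) + ρ Set.univ = (c • Measure.dirac x) Set.univ + ρ Set.univ := by simp
    _ ≤ tvMass (c • Measure.dirac x) ρ + 2 * ((c • Measure.dirac x) ⊓ ρ) Set.univ :=
      measure_univ_add_le_tvMass _ _
    _ ≤ _ := by gcongr; exact inf_smul_dirac_univ_le c x ρ

theorem two_mul_le_tvMass_add_tvMass {μ' ν' : Measure X} {π : Measure (X × X)}
    (h₁ : π.map Prod.fst = μ') (h₂ : π.map Prod.snd = ν') (c : ℝ≥0) (x y : X) :
    2 * (c : ℝ≥0∞) ≤ tvMass (c • Measure.dirac x) μ' + tvMass (c • Measure.dirac y) ν' +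
      2 * min (c : ℝ≥0∞) (π {(x, y)}) := by
  have hμ' : μ' Set.univ = π Set.univ := by
    rw [← h₁, Measure.map_apply measurable_fst MeasurableSet.univ, Set.preimage_univ]
  have hν' : ν' Set.univ = π Set.univ := by
    rw [← h₂, Measure.map_apply measurable_snd MeasurableSet.univ, Set.preimage_univ]
  set M := π Set.univ
  by_cases hM : M = ⊤
  · simp [tvMass_eq_top _ (hμ'.trans hM)]
  have hx := add_measure_univ_le_tvMass_smul_dirac c x μ'
  have hy := add_measure_univ_le_tvMass_smul_dirac c y ν'
  rw [hμ'] at hx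
  rw [hν'] at hy
  set e₁ := tvMass (c • Measure.dirac x) μ'
  set e₂ := tvMass (c • Measure.dirac y) ν'
  set C : ℝ≥0∞ := (c : ℝ≥0∞)
  have h2M : 2 * M ≠ ⊤ := ENNReal.mul_ne_top ENNReal.ofNat_ne_top hM
  refine ENNReal.le_of_add_le_add_right h2M ?_
  calc 2 * C + 2 * M = (C + M) + (C + M) := by ring
    _ ≤ (e₁ + 2 * min C (μ' {x})) + (e₂ + 2 * min C (ν' {y})) := add_le_add hx hy
    _ = e₁ + e₂ + 2 * (min C (μ' {x}) + min C (ν' {y})) := by ring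
    _ ≤ e₁ + e₂ + 2 * (M + min C (π {(x, y)})) := by
      gcongr _ + 2 * ?_; exact min_add_min_le_of_coupling h₁ h₂ C x y
    _ = e₁ + e₂ + 2 * min C (π {(x, y)}) + 2 * M := by ring

theorem toJordanDecomposition_smul_dirac_sub_dirac {x y : X} (hxy : x ≠ y) (c : ℝ≥0) :
    ((c : ℝ) • ((Measure.dirac x).toSignedMeasure -
      (Measure.dirac y).toSignedMeasure)).toJordanDecomposition =
      ⟨c • Measure.dirac x, c • Measure.dirac y,
        ((dirac_mutuallySingular_dirac hxy).smul_nnreal c).symm.smul_nnreal c |>.symm⟩ := by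
  rw [smul_toSignedMeasure_sub, toJordanDecomposition_toSignedMeasure_sub]

theorem totalVariation_smul_dirac_sub_dirac {x y : X} (hxy : x ≠ y) (c : ℝ≥0) :
    ((c : ℝ) • ((Measure.dirac x).toSignedMeasure -
      (Measure.dirac y).toSignedMeasure)).totalVariation Set.univ = 2 * c := by
  rw [SignedMeasure.totalVariation, toJordanDecomposition_smul_dirac_sub_dirac hxy c]
  simp [two_mul]

end

section

variable {X : Type*} [MeasurableSpace X] [MetricSpace X] [MeasurableSingletonClass X]

theorem W1_smul_dirac_le (c : ℝ≥0) (x y : X) :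
    W1 (c • Measure.dirac x) (c • Measure.dirac y) ≤ c * edist x y := by
  have hπ : (c • Measure.dirac (x, y)).map Prod.fst = c • Measure.dirac x ∧
      (c • Measure.dirac (x, y)).map Prod.snd = c • Measure.dirac y := by
    simp [Measure.map_smul, Measure.map_dirac' measurable_fst, Measure.map_dirac' measurable_snd]
  refine iInf₂_le_of_le _ hπ (le_of_eq ?_)
  rw [ENNReal.smul_def, lintegral_smul_measure, lintegral_dirac]
  rfl

theorem genW_smul_dirac_le (a b : ℝ) (c : ℝ≥0) (x y : X) :
    genW a b (c • Measure.dirac x) (c • Measure.dirac y) ≤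
      ENNReal.ofReal b * (c * edist x y) := by
  refine (iInf₂_le (c • Measure.dirac x) (c • Measure.dirac y)).trans
    (iInf_le_of_le (by simp) ?_)
  rw [tvMass_self, tvMass_self, add_zero, mul_zero, zero_add]
  gcongr
  exact W1_smul_dirac_le c x y

theorem edist_mul_le_lintegral_edist (π : Measure (X × X)) (x y : X) :
    edist x y * π {(x, y)} ≤ ∫⁻ p, edist p.1 p.2 ∂π :=
  (lintegral_singleton _ (x, y)).symm.le.trans (setLIntegral_le_lintegral _ _)

theorem ofReal_mul_le_cost_of_coupling {a b : ℝ} {c : ℝ≥0} {x y : X}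
    (hab : b * dist x y ≤ 2 * a) {μ' ν' : Measure X} {π : Measure (X × X)}
    (h₁ : π.map Prod.fst = μ') (h₂ : π.map Prod.snd = ν') :
    ENNReal.ofReal b * (c * edist x y) ≤
      ENNReal.ofReal a * (tvMass (c • Measure.dirac x) μ' + tvMass (c • Measure.dirac y) ν') +
        ENNReal.ofReal b * ∫⁻ p, edist p.1 p.2 ∂π := by
  set q := min (c : ℝ≥0∞) (π {(x, y)})
  have hab' : ENNReal.ofReal b * edist x y ≤ 2 * ENNReal.ofReal a := by
    rw [edist_dist, ← ENNReal.ofReal_mul' dist_nonneg, ← ENNReal.ofReal_ofNat 2,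
      ← ENNReal.ofReal_mul zero_le_two]
    exact ENNReal.ofReal_le_ofReal hab
  have htv : 2 * ((c : ℝ≥0∞) - q) ≤
      tvMass (c • Measure.dirac x) μ' + tvMass (c • Measure.dirac y) ν' := by
    rw [ENNReal.mul_sub fun _ _ => ENNReal.ofNat_ne_top, tsub_le_iff_right]
    exact two_mul_le_tvMass_add_tvMass h₁ h₂ c x y
  have hW : edist x y * q ≤ ∫⁻ p, edist p.1 p.2 ∂π :=
    le_trans (by gcongr; exact min_le_right _ _) (edist_mul_le_lintegral_edist π x y)
  set C : ℝ≥0∞ := (c : ℝ≥0∞)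
  set W := ∫⁻ p, edist p.1 p.2 ∂π
  calc ENNReal.ofReal b * (C * edist x y)
      = (C - q) * (ENNReal.ofReal b * edist x y) + ENNReal.ofReal b * (edist x y * q) := by
        conv_lhs => rw [← tsub_add_cancel_of_le (min_le_left C (π {(x, y)}))]
        ring
    _ ≤ (C - q) * (2 * ENNReal.ofReal a) + ENNReal.ofReal b * W := by gcongr
    _ = ENNReal.ofReal a * (2 * (C - q)) + ENNReal.ofReal b * W := by ring
    _ ≤ _ := by gcongr

theorem genW_smul_dirac_eq {a b : ℝ} (c : ℝ≥0) {x y : X} (hab : b * dist x y ≤ 2 * a) :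
    genW a b (c • Measure.dirac x) (c • Measure.dirac y) =
      ENNReal.ofReal b * (c * edist x y) := by
  refine le_antisymm (genW_smul_dirac_le a b c x y) ?_
  refine le_iInf fun μ' => le_iInf fun ν' => le_iInf fun _ => ?_
  by_cases hb : ENNReal.ofReal b = 0
  · simp [hb]
  rw [W1, ENNReal.mul_iInf_of_ne hb ENNReal.ofReal_ne_top, ENNReal.add_iInf]
  refine le_iInf fun π => ?_
  rw [ENNReal.mul_iInf_of_ne hb ENNReal.ofReal_ne_top, ENNReal.add_iInf]
  exact le_iInf fun hπ => ofReal_mul_le_cost_of_coupling hab hπ.1 hπ.2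

theorem sNorm_smul_dirac_sub_dirac {a b : ℝ} {x y : X} (hxy : x ≠ y) (c : ℝ≥0)
    (hab : b * dist x y ≤ 2 * a) :
    sNorm a b ((c : ℝ) • ((Measure.dirac x).toSignedMeasure -
      (Measure.dirac y).toSignedMeasure)) =
      ENNReal.ofReal b * (c * edist x y) := by
  rw [sNorm, toJordanDecomposition_smul_dirac_sub_dirac hxy c]
  exact genW_smul_dirac_eq c hab

end

theorem sNorm_smul_dirac_sub_dirac_neg {a b r : ℝ} (hr : 0 < r) (c : ℝ≥0)
    (hab : b * (2 * r) ≤ 2 * a) :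
    sNorm a b ((c : ℝ) • ((Measure.dirac r).toSignedMeasure -
      (Measure.dirac (-r)).toSignedMeasure)) =
      ENNReal.ofReal (2 * b * c * r) := by
  have hdist : dist r (-r) = 2 * r := by
    rw [Real.dist_eq, sub_neg_eq_add, ← two_mul, abs_of_pos (by positivity)]
  rw [sNorm_smul_dirac_sub_dirac (by linarith) c (by rwa [hdist]), edist_dist, hdist,
    ← ENNReal.ofReal_coe_nnreal, ← ENNReal.ofReal_mul c.coe_nonneg,
    ← ENNReal.ofReal_mul' (by positivity)]
  ring_nf

theorem totalVariation_smul_dirac_sub_dirac_neg {r : ℝ} (hr : 0 < r) (c : ℝ≥0) :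
    ((c : ℝ) • ((Measure.dirac r).toSignedMeasure -
      (Measure.dirac (-r)).toSignedMeasure)).totalVariation Set.univ = ENNReal.ofReal (2 * c) := by
  rw [totalVariation_smul_dirac_sub_dirac (by linarith) c, ENNReal.ofReal_mul zero_le_two,
    ENNReal.ofReal_ofNat, ENNReal.ofReal_coe_nnreal]

theorem not_exists_bound_of_eq_ofReal_two_mul {f : ℕ → ℝ≥0∞}
    (hf : ∀ n : ℕ, 1 ≤ n → f n = ENNReal.ofReal (2 * (n : ℝ))) :
    ¬ ∃ C : ℝ≥0∞, C ≠ ⊤ ∧ ∀ n, f n ≤ C := by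
  rintro ⟨C, hC, hbound⟩
  obtain ⟨k, hk⟩ := ENNReal.exists_nat_gt hC
  refine (hbound (k + 1)).not_gt (hk.trans_le ?_)
  rw [hf (k + 1) k.succ_pos, ← Nat.cast_ofNat, ← Nat.cast_mul, ENNReal.ofReal_natCast]
  exact_mod_cast (by omega : k ≤ 2 * (k + 1))

theorem stmt14_general (a b : ℝ) (ha : 0 < a) :
    let μseq : ℕ → SignedMeasure ℝ := fun n =>
      (n : ℝ) • ((Measure.dirac (1 / (n : ℝ) ^ 2)).toSignedMeasure -
                 (Measure.dirac (-(1 / (n : ℝ) ^ 2))).toSignedMeasure)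
    (∀ᶠ n in atTop, sNorm a b (μseq n) = ENNReal.ofReal (2 * b * (n : ℝ) / (n : ℝ) ^ 2)) ∧
    Tendsto (fun n => sNorm a b (μseq n)) atTop (nhds 0) ∧
    (∀ n : ℕ, 1 ≤ n → (μseq n).totalVariation Set.univ = ENNReal.ofReal (2 * (n : ℝ))) ∧
    ¬ ∃ C : ℝ≥0∞, C ≠ ⊤ ∧ ∀ n, (μseq n).totalVariation Set.univ ≤ C := by
  intro μseq
  have hsmall : Tendsto (fun n : ℕ => b * (2 * (1 / (n : ℝ) ^ 2))) atTop (nhds 0) := by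
    simpa using ((tendsto_inv_atTop_zero.comp
      ((tendsto_pow_atTop two_ne_zero).comp tendsto_natCast_atTop_atTop)).const_mul 2).const_mul b
  have hnorm : ∀ᶠ n : ℕ in atTop,
      sNorm a b (μseq n) = ENNReal.ofReal (2 * b * (n : ℝ) / (n : ℝ) ^ 2) := by
    filter_upwards [eventually_ge_atTop 1, hsmall.eventually_le_const (by linarith : 0 < 2 * a)]
      with n hn hab
    have h := sNorm_smul_dirac_sub_dirac_neg (r := 1 / (n : ℝ) ^ 2) (by positivity) n hab
    rw [NNReal.coe_natCast] at h
    exact h.trans (congrArg ENNReal.ofReal (by ring))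
  have hlim : Tendsto (fun n : ℕ => 2 * b * (n : ℝ) / (n : ℝ) ^ 2) atTop (nhds 0) := by
    refine (tendsto_const_nhds (x := 2 * b).div_atTop tendsto_natCast_atTop_atTop).congr' ?_
    filter_upwards [eventually_ne_atTop 0] with n hn
    field_simp
  have htv (n : ℕ) (hn : 1 ≤ n) :
      (μseq n).totalVariation Set.univ = ENNReal.ofReal (2 * (n : ℝ)) := by
    have h := totalVariation_smul_dirac_sub_dirac_neg (r := 1 / (n : ℝ) ^ 2) (by positivity) n
    rwa [NNReal.coe_natCast] at h
  refine ⟨hnorm, ?_, htv, not_exists_bound_of_eq_ofReal_two_mul htv⟩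
  simpa using (ENNReal.tendsto_ofReal hlim).congr' (hnorm.mono fun n h => h.symm)

/-- `μ_n = n δ_{1/n²} - n δ_{-1/n²}` satisfies
`‖μ_n‖^{a,b} = 2bn/n²` for large `n`, hence `‖μ_n‖^{a,b} → 0`, while the total
masses `|μ_n| = 2n` are unbounded. -/
theorem stmt14 (a b : ℝ) (ha : 0 < a) (hb : 0 < b) :
    let μseq : ℕ → SignedMeasure ℝ := fun n =>
      (n : ℝ) • ((Measure.dirac (1 / (n : ℝ) ^ 2)).toSignedMeasure -
                 (Measure.dirac (-(1 / (n : ℝ) ^ 2))).toSignedMeasure)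
    (∀ᶠ n in atTop, sNorm a b (μseq n) = ENNReal.ofReal (2 * b * (n : ℝ) / (n : ℝ) ^ 2)) ∧
    Tendsto (fun n => sNorm a b (μseq n)) atTop (nhds 0) ∧
    (∀ n : ℕ, 1 ≤ n → (μseq n).totalVariation Set.univ = ENNReal.ofReal (2 * (n : ℝ))) ∧
    ¬ ∃ C : ℝ≥0∞, C ≠ ⊤ ∧ ∀ n, (μseq n).totalVariation Set.univ ≤ C :=
  stmt14_general a b ha
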